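/- Let $G$ be a finitely generated infinite group with word metric, and let $\Gamma \subseteq G$ be asymptotically sparse. Then for every right-invariant mean $\overline{m}$ on $\ell^\infty(G)$ one has $\overline{m}(\chi_\Gamma) = 0$. -/

import Mathlib

/-- The space `ℓ∞(G)` of bounded real-valued functions on `G`, as a submodule of `G → ℝ`. -/
def Linf (G : Type*) : Submodule ℝ (G → ℝ) where
  carrier := {f | ∃ C : ℝ, ∀ x, |f x| ≤ C}
  add_mem' := by
    rintro f g ⟨C, hC⟩ ⟨D, hD⟩
    exact ⟨C + D, fun x => by
      simpa using (abs_add_le (f x) (g x)).trans (add_le_add (hC x) (hD x))⟩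
  zero_mem' := ⟨0, fun x => by simp⟩
  smul_mem' := by
    rintro c f ⟨C, hC⟩
    exact ⟨|c| * C, fun x => by
      simpa [abs_mul] using mul_le_mul_of_nonneg_left (hC x) (abs_nonneg c)⟩

open Classical in
/-- The characteristic function of a set, as an element of `ℓ∞`. -/
noncomputable def chi {G : Type*} (A : Set G) : Linf G :=
  ⟨fun x => if x ∈ A then 1 else 0, ⟨1, fun x => by by_cases h : x ∈ A <;> simp [h]⟩⟩

/-- Left translation action on `ℓ∞(G)`: `(g • φ)(x) = φ(g⁻¹ x)`. -/
def lT {G : Type*} [Group G] (g : G) (φ : Linf G) : Linf G :=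
  ⟨fun x => (φ : G → ℝ) (g⁻¹ * x), by obtain ⟨C, hC⟩ := φ.2; exact ⟨C, fun x => hC _⟩⟩

/-- Right translation action on `ℓ∞(G)`: `(φ • g)(x) = φ(x g)`. -/
def rT {G : Type*} [Group G] (g : G) (φ : Linf G) : Linf G :=
  ⟨fun x => (φ : G → ℝ) (x * g), by obtain ⟨C, hC⟩ := φ.2; exact ⟨C, fun x => hC _⟩⟩

/-- A mean on `G`: a normalized positive linear functional on `ℓ∞(G)`. -/
structure Mean (G : Type*) where
  toFun : Linf G →ₗ[ℝ] ℝ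
  normalized : toFun (chi Set.univ) = 1
  pos : ∀ φ : Linf G, (∀ x, 0 ≤ (φ : G → ℝ) x) → 0 ≤ toFun φ

/-- A mean is left invariant if it is invariant under left translations. -/
def Mean.LeftInvariant {G : Type*} [Group G] (m : Mean G) : Prop :=
  ∀ (g : G) (φ : Linf G), m.toFun (lT g φ) = m.toFun φ

/-- A mean is right invariant if it is invariant under right translations. -/
def Mean.RightInvariant {G : Type*} [Group G] (m : Mean G) : Prop :=
  ∀ (g : G) (φ : Linf G), m.toFun (rT g φ) = m.toFun φ

/-- The word distance on a group `G` with respect to a generating set `Sg`: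
`d(g,h)` is the minimal length of a word in `Sg ∪ Sg⁻¹` representing `g⁻¹h`. -/
noncomputable def wordDist {G : Type*} [Group G] (Sg : Set G) (g h : G) : ℕ :=
  sInf {n | ∃ w : List G, w.length = n ∧ (∀ x ∈ w, x ∈ Sg ∨ x⁻¹ ∈ Sg) ∧ w.prod = g⁻¹ * h}

/-- The closed ball of radius `r` around `g` in the word metric. -/
noncomputable def wball {G : Type*} [Group G] (Sg : Set G) (g : G) (r : ℕ) : Set G :=
  {x | wordDist Sg g x ≤ r}

/-- The `r`-boundary `∂_r A = {g : 0 < d(g, A) ≤ r}` of a set `A`. -/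
noncomputable def rBoundary {G : Type*} [Group G] (Sg : Set G) (r : ℕ) (A : Set G) : Set G :=
  {g | g ∉ A ∧ ∃ a ∈ A, wordDist Sg a g ≤ r}

/-- A Følner sequence: a sequence of nonempty finite subsets whose `r`-boundaries are
asymptotically negligible for every `r > 0`. -/
def IsFolner {G : Type*} [Group G] (Sg : Set G) (S : ℕ → Finset G) : Prop :=
  (∀ j, (S j).Nonempty) ∧ ∀ r : ℕ, 0 < r →
    Filter.Tendsto (fun j => ((rBoundary Sg r (S j : Set G)).ncard : ℝ) / (S j).card)
      Filter.atTop (nhds 0)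

/-- `c : G → ℝ` is a boundary in the degree-zero uniformly finite chain complex: there is
a bounded `1`-chain `b : G² → ℝ`, supported on pairs of uniformly bounded distance, with
`∂₁ b = c`, where `∂₁ b (x) = ∑_y b(y,x) - ∑_y b(x,y)`. -/
noncomputable def IsUFBoundary {G : Type*} [Group G] (Sg : Set G) (c : G → ℝ) : Prop :=
  ∃ b : G × G → ℝ,
    (∃ C : ℝ, ∀ p, |b p| ≤ C) ∧
    (∃ R : ℕ, ∀ p : G × G, R < wordDist Sg p.1 p.2 → b p = 0) ∧
    ∀ x : G, c x = (∑ᶠ y, b (y, x)) - (∑ᶠ y, b (x, y))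

/-- A subset `Γ` of a finitely generated group is asymptotically sparse: there is `C`
such that for every radius `r > 0`, outside a large ball around the identity, every
`r`-ball meets `Γ` in at most `C` points. -/
noncomputable def IsSparse {G : Type*} [Group G] (Sg : Set G) (Γ : Set G) : Prop :=
  ∃ C : ℕ, ∀ r : ℕ, 0 < r → ∃ R : ℕ, ∀ g : G, R < wordDist Sg 1 g →
    Set.ncard {x | x ∈ Γ ∧ wordDist Sg g x ≤ r} ≤ C

/-! Right invariance gives every right translate `χ_A · b` the mean `m(χ_A)`. If the translates
by the elements of a finite `B ⊆ G` sum to at most `C` pointwise, then `|B| · m(χ_A) ≤ C`, and as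
`G` is infinite `|B|` can be arbitrarily large, so `m(χ_A) = 0`. For finite `A` one may take
`C = |A|`; hence means ignore finite sets. For sparse `Γ`, removing a large finite ball `K` (which
does not change the mean) leaves a set meeting every translate `x B` in at most `C` points: a far
`x B` lies in a ball of fixed radius around `x`, and a near one lies inside `K`. -/

theorem eq_zero_of_forall_nsmul_le {α : Type*} [AddCommGroup α] [PartialOrder α]
    [IsOrderedAddMonoid α] [Archimedean α] {v c : α} (hv : 0 ≤ v) (h : ∀ n : ℕ, n • v ≤ c) :
    v = 0 := by
  by_contra hne
  obtain ⟨n, hn⟩ := Archimedean.arch (c + v) (lt_of_le_of_ne hv (Ne.symm hne))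
  have : c + v ≤ c + 0 := by simpa using hn.trans (h n)
  exact hne (le_antisymm (le_of_add_le_add_left this) hv)

section WordMetric

variable {G : Type*} [Group G] {Sg : Set G}

theorem wordDist_eq_one_inv_mul (Sg : Set G) (g h : G) :
    wordDist Sg g h = wordDist Sg 1 (g⁻¹ * h) := by
  simp [wordDist]

theorem exists_word_prod_eq (hgen : Subgroup.closure Sg = ⊤) (x : G) :
    ∃ w : List G, (∀ a ∈ w, a ∈ Sg ∨ a⁻¹ ∈ Sg) ∧ w.prod = x := by
  have hx : x ∈ Subgroup.closure Sg := by simp [hgen]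
  induction hx using Subgroup.closure_induction with
  | mem s hs => exact ⟨[s], by simpa using Or.inl hs, by simp⟩
  | one => exact ⟨[], by simp, by simp⟩
  | mul a b _ _ ha hb =>
    obtain ⟨u, hu, rfl⟩ := ha
    obtain ⟨v, hv, rfl⟩ := hb
    refine ⟨u ++ v, fun a ha => ?_, List.prod_append⟩
    rcases List.mem_append.1 ha with h | h
    exacts [hu a h, hv a h]
  | inv a _ ha =>
    obtain ⟨w, hw, rfl⟩ := ha
    refine ⟨(w.map (·⁻¹)).reverse, fun a ha => ?_, List.prod_inv_reverse w |>.symm⟩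
    obtain ⟨b, hb, rfl⟩ := List.mem_map.1 (List.mem_reverse.1 ha)
    simpa [or_comm] using hw b hb

theorem wordDist_le_length (x : G) {w : List G} (hw : ∀ a ∈ w, a ∈ Sg ∨ a⁻¹ ∈ Sg)
    (hx : w.prod = x) : wordDist Sg 1 x ≤ w.length :=
  Nat.sInf_le ⟨w, rfl, hw, by simpa using hx⟩

theorem exists_word_length_eq_wordDist (hgen : Subgroup.closure Sg = ⊤) (x : G) :
    ∃ w : List G, w.length = wordDist Sg 1 x ∧ (∀ a ∈ w, a ∈ Sg ∨ a⁻¹ ∈ Sg) ∧ w.prod = x := by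
  obtain ⟨w, hw, hx⟩ := exists_word_prod_eq hgen x
  have hne : {n | ∃ w : List G, w.length = n ∧ (∀ a ∈ w, a ∈ Sg ∨ a⁻¹ ∈ Sg) ∧
      w.prod = 1⁻¹ * x}.Nonempty := ⟨w.length, w, rfl, hw, by simpa using hx⟩
  simpa [wordDist] using Nat.sInf_mem hne

theorem wordDist_one_mul_le (hgen : Subgroup.closure Sg = ⊤) (x y : G) :
    wordDist Sg 1 (x * y) ≤ wordDist Sg 1 x + wordDist Sg 1 y := by
  obtain ⟨u, hu_len, hu, rfl⟩ := exists_word_length_eq_wordDist hgen x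
  obtain ⟨v, hv_len, hv, rfl⟩ := exists_word_length_eq_wordDist hgen y
  rw [← hu_len, ← hv_len, ← List.length_append]
  refine wordDist_le_length _ (fun a ha => ?_) List.prod_append
  rcases List.mem_append.1 ha with h | h
  exacts [hu a h, hv a h]

theorem finite_wball {Sg : Finset G} (hgen : Subgroup.closure (Sg : Set G) = ⊤) (g : G)
    (r : ℕ) : (wball Sg g r).Finite := by
  let T := (Sg : Set G) ∪ (Sg : Set G)⁻¹
  have : Finite T := (Sg.finite_toSet.union Sg.finite_toSet.inv).to_subtype
  have hwords := ((List.finite_length_le T r).image fun l => (l.map Subtype.val).prod)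
  refine (hwords.image (g * ·)).subset fun x hx => ?_
  obtain ⟨w, hw_len, hw, hprod⟩ := exists_word_length_eq_wordDist hgen (g⁻¹ * x)
  lift w to List T using fun a ha => hw a ha
  refine ⟨_, ⟨w, ?_, rfl⟩, show g * (w.map Subtype.val).prod = x by rw [hprod, mul_inv_cancel_left]⟩
  simpa [← hw_len, wball, wordDist_eq_one_inv_mul Sg g x] using hx

end WordMetric

theorem IsSparse.exists_ncard_le_off_finite {G : Type*} [Group G] {Sg : Finset G}
    (hgen : Subgroup.closure (Sg : Set G) = ⊤) {Γ : Set G} (hΓ : IsSparse Sg Γ) :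
    ∃ C : ℕ, ∀ B : Finset G, ∃ K : Set G, K.Finite ∧
      ∀ x : G, {b ∈ (B : Set G) | x * b ∈ Γ \ K}.ncard ≤ C := by
  obtain ⟨C, hC⟩ := hΓ
  refine ⟨C, fun B => ?_⟩
  set r := max (B.sup (wordDist Sg 1)) 1
  have hBr : ∀ b ∈ B, wordDist Sg 1 b ≤ r := fun b hb =>
    (Finset.le_sup (f := wordDist Sg 1) hb).trans (le_max_left _ _)
  obtain ⟨R, hR⟩ := hC r (lt_max_of_lt_right one_pos)
  refine ⟨wball Sg 1 (R + r), finite_wball hgen 1 _, fun x => ?_⟩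
  by_cases hfar : R < wordDist Sg 1 x
  · have hS : {y | y ∈ Γ ∧ wordDist Sg x y ≤ r}.Finite :=
      (finite_wball hgen x r).subset fun y hy => hy.2
    refine le_trans (Set.ncard_le_ncard_of_injOn (x * ·) (fun b hb => ?_)
      (mul_right_injective x).injOn hS) (hR x hfar)
    exact ⟨hb.2.1, by simpa [wordDist_eq_one_inv_mul] using hBr b hb.1⟩
  · suffices {b ∈ (B : Set G) | x * b ∈ Γ \ wball Sg 1 (R + r)} = ∅ by
      rw [this, Set.ncard_empty]; exact Nat.zero_le C
    refine Set.eq_empty_of_forall_notMem fun b ⟨hb, hxb⟩ => hxb.2 ?_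
    exact (wordDist_one_mul_le hgen x b).trans (add_le_add (not_lt.1 hfar) (hBr b hb))

theorem chi_eq_chi_diff_add_chi_inter {G : Type*} (A K : Set G) :
    chi A = chi (A \ K) + chi (A ∩ K) := by
  ext x
  by_cases hA : x ∈ A <;> by_cases hK : x ∈ K <;> simp [chi, hA, hK]

namespace Mean

variable {G : Type*} (m : Mean G)

theorem mono {φ ψ : Linf G} (h : ∀ x, (φ : G → ℝ) x ≤ (ψ : G → ℝ) x) :
    m.toFun φ ≤ m.toFun ψ := by
  have := m.pos (ψ - φ) fun x => sub_nonneg.2 (h x)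
  rwa [map_sub, sub_nonneg] at this

theorem chi_nonneg (A : Set G) : 0 ≤ m.toFun (chi A) :=
  m.pos _ fun x => by by_cases h : x ∈ A <;> simp [chi, h]

variable [Group G] {m}

theorem coe_sum_rT_chi_apply (B : Finset G) (A : Set G) (x : G) :
    ((∑ b ∈ B, rT b (chi A) : Linf G) : G → ℝ) x = {b ∈ (B : Set G) | x * b ∈ A}.ncard := by
  classical
  have : {b ∈ (B : Set G) | x * b ∈ A} = ↑(B.filter fun b => x * b ∈ A) := by ext; simp
  rw [this, Set.ncard_coe_finset]
  simp [rT, chi, Finset.sum_boole]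

theorem card_nsmul_chi_le (hm : m.RightInvariant) {B : Finset G} {A : Set G} {C : ℕ}
    (hB : ∀ x : G, {b ∈ (B : Set G) | x * b ∈ A}.ncard ≤ C) :
    B.card • m.toFun (chi A) ≤ C := by
  have hsum : m.toFun (∑ b ∈ B, rT b (chi A)) = B.card • m.toFun (chi A) := by
    simp [map_sum, hm _ (chi A)]
  have hC : m.toFun ((C : ℝ) • chi Set.univ) = C := by
    rw [map_smul, m.normalized, smul_eq_mul, mul_one]
  rw [← hsum, ← hC]
  refine m.mono fun x => ?_
  rw [coe_sum_rT_chi_apply]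
  simpa [chi] using (Nat.cast_le (α := ℝ)).2 (hB x)

theorem chi_eq_zero_of_finite [Infinite G] (hm : m.RightInvariant) {F : Set G}
    (hF : F.Finite) : m.toFun (chi F) = 0 := by
  refine eq_zero_of_forall_nsmul_le (m.chi_nonneg F) (c := (F.ncard : ℝ)) fun n => ?_
  obtain ⟨B, rfl⟩ := Infinite.exists_subset_card_eq G n
  exact card_nsmul_chi_le hm fun x =>
    Set.ncard_le_ncard_of_injOn (x * ·) (fun b hb => hb.2) (mul_right_injective x).injOn hF

theorem chi_diff_of_finite [Infinite G] (hm : m.RightInvariant) (A : Set G) {F : Set G}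
    (hF : F.Finite) : m.toFun (chi (A \ F)) = m.toFun (chi A) := by
  rw [chi_eq_chi_diff_add_chi_inter A F, map_add, chi_eq_zero_of_finite hm (hF.inter_of_right A),
    add_zero]

end Mean

/-- Let `G` be a finitely generated infinite group and `Γ ⊆ G`
asymptotically sparse. Then every right-invariant mean vanishes on `χ_Γ`. -/
theorem sparse_mean_invisible {G : Type*} [Group G] [Infinite G]
    (Sg : Finset G) (hgen : Subgroup.closure (Sg : Set G) = ⊤)
    (Γ : Set G) (hΓ : IsSparse (Sg : Set G) Γ)
    (m : Mean G) (hm : m.RightInvariant) :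
    m.toFun (chi Γ) = 0 := by
  obtain ⟨C, hC⟩ := hΓ.exists_ncard_le_off_finite hgen
  refine eq_zero_of_forall_nsmul_le (m.chi_nonneg Γ) (c := (C : ℝ)) fun n => ?_
  obtain ⟨B, rfl⟩ := Infinite.exists_subset_card_eq G n
  obtain ⟨K, hK, hB⟩ := hC B
  rw [← Mean.chi_diff_of_finite hm Γ hK]
  exact Mean.card_nsmul_chi_le hm hB
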